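/- In 𝒯, for any triangle of 𝒯 and any vertex A of that triangle, at most one of the two edges of the triangle meeting at A continues at A. -/

import Mathlib

noncomputable section

/-- The Euclidean plane. -/
abbrev Pt : Type := EuclideanSpace ℝ (Fin 2)

/-- An equilateral triangle in the plane, given by its three vertices. -/
structure EqTri : Type where
  A : Pt
  B : Pt
  C : Pt
  indep : AffineIndependent ℝ ![A, B, C]
  eqAB : dist A B = dist B C
  eqBC : dist B C = dist C A

/-- The (closed) triangle as a subset of the plane. -/
def EqTri.set (T : EqTri) : Set Pt := convexHull ℝ {T.A, T.B, T.C}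

/-- The side length of an equilateral triangle. -/
def EqTri.side (T : EqTri) : ℝ := dist T.A T.B

/-- The vertex set of a triangle. -/
def EqTri.vertices (T : EqTri) : Set Pt := {T.A, T.B, T.C}

/-- The ordered pair `(P, Q)` spans an edge of `T`. -/
def EqTri.IsEdge (T : EqTri) (P Q : Pt) : Prop :=
  (P = T.A ∧ Q = T.B) ∨ (P = T.B ∧ Q = T.A) ∨
  (P = T.B ∧ Q = T.C) ∨ (P = T.C ∧ Q = T.B) ∨
  (P = T.C ∧ Q = T.A) ∨ (P = T.A ∧ Q = T.C)

/-- The edges (sides) of a triangle, as subsets of the plane. -/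
def EqTri.edges (T : EqTri) : Set (Set Pt) :=
  {segment ℝ T.A T.B, segment ℝ T.B T.C, segment ℝ T.C T.A}

/-- A family of equilateral triangles tiles the plane: pairwise disjoint interiors,
union is everything. -/
def IsTiling (𝒯 : Set EqTri) : Prop :=
  (∀ T ∈ 𝒯, ∀ T' ∈ 𝒯, T ≠ T' → Disjoint (interior T.set) (interior T'.set)) ∧
  (⋃ T ∈ 𝒯, T.set) = Set.univ

/-- No two (distinct) triangles of the family share a side. -/
def NoSharedSide (𝒯 : Set EqTri) : Prop :=
  ∀ T ∈ 𝒯, ∀ T' ∈ 𝒯, T ≠ T' → ∀ e ∈ T.edges, ∀ e' ∈ T'.edges, e ≠ e'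

/-- The side lengths of the triangles of the family are bounded below by a positive
constant. -/
def SidesBoundedBelow (𝒯 : Set EqTri) : Prop :=
  ∃ c : ℝ, 0 < c ∧ ∀ T ∈ 𝒯, c ≤ T.side

/-- The standing assumptions: `𝒯` is a tiling of the plane by equilateral triangles,
side lengths bounded below by a positive constant, no two triangles share a side. -/
def GoodTiling (𝒯 : Set EqTri) : Prop :=
  IsTiling 𝒯 ∧ SidesBoundedBelow 𝒯 ∧ NoSharedSide 𝒯

/-- The edge `[P,Q]` of `T ∈ 𝒯` is subdivided: some interior point of it is a vertex of
another triangle of the tiling. -/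
def Subdivided (𝒯 : Set EqTri) (T : EqTri) (P Q : Pt) : Prop :=
  ∃ T' ∈ 𝒯, T' ≠ T ∧ ∃ V ∈ T'.vertices, V ∈ openSegment ℝ P Q

/-- The edge `[A,B]` of `T ∈ 𝒯` continues at `A`: the point `A` lies in the interior of an
edge `e` of another triangle of the tiling, and `e` contains an interior point of `[A,B]`. -/
def ContinuesAt (𝒯 : Set EqTri) (T : EqTri) (A B : Pt) : Prop :=
  ∃ T' ∈ 𝒯, T' ≠ T ∧ ∃ P Q : Pt, T'.IsEdge P Q ∧ A ∈ openSegment ℝ P Q ∧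
    ∃ X ∈ segment ℝ P Q, X ∈ openSegment ℝ A B

/-- A triangle of the tiling is small if all three of its edges are uncut. -/
def SmallTri (𝒯 : Set EqTri) (T : EqTri) : Prop :=
  ¬ Subdivided 𝒯 T T.A T.B ∧ ¬ Subdivided 𝒯 T T.B T.C ∧ ¬ Subdivided 𝒯 T T.C T.A

/-- A triangle of the tiling is large if all three of its edges are subdivided. -/
def LargeTri (𝒯 : Set EqTri) (T : EqTri) : Prop :=
  Subdivided 𝒯 T T.A T.B ∧ Subdivided 𝒯 T T.B T.C ∧ Subdivided 𝒯 T T.C T.A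

/-- A triangle of the tiling is improper if it has an uncut edge and also an edge that
continues at neither of its endpoints. -/
def ImproperTri (𝒯 : Set EqTri) (T : EqTri) : Prop :=
  (∃ P Q : Pt, T.IsEdge P Q ∧ ¬ Subdivided 𝒯 T P Q) ∧
  (∃ P Q : Pt, T.IsEdge P Q ∧ ¬ ContinuesAt 𝒯 T P Q ∧ ¬ ContinuesAt 𝒯 T Q P)

/-- Two subsets of the plane are congruent if some isometry of the plane maps one
onto the other. -/
def Congruent' (s t : Set Pt) : Prop := ∃ f : Pt ≃ᵢ Pt, f '' s = t

/-!
If both edges continue at `A`, then `A` is an interior point of an edge `e₁` of some `T₁ ∈ 𝒯`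
lying on the line `AQ` and of an edge `e₂` of some `T₂ ∈ 𝒯` lying on the line `AR`. If
`T₁ = T₂`, the edges `e₁` and `e₂` share an endpoint, which lies on both lines and hence is `A`,
impossible for an interior point. If `T₁ ≠ T₂`, near `A` each `Tᵢ` fills a half-disc bounded by
its line, and two half-discs centred at `A` with non-parallel boundaries overlap, so the
interiors of `T₁` and `T₂` meet.
-/

open Set Topology Submodule

section LinearAlgebra

variable {k E : Type*} [Field k] [AddCommGroup E] [Module k E]

lemma linearIndependent_sub_of_affineIndependent {A Q R : E}
    (h : AffineIndependent k ![A, Q, R]) : LinearIndependent k ![Q - A, R - A] := by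
  rw [affineIndependent_iff_linearIndependent_vsub k _ (0 : Fin 3),
    ← linearIndependent_equiv (finSuccAboveEquiv (0 : Fin 3))] at h
  convert! h
  ext i
  fin_cases i <;> rfl

lemma isCompl_span_singleton_sub_of_affineIndependent (hE : Module.finrank k E = 2) {A Q R : E}
    (h : AffineIndependent k ![A, Q, R]) : IsCompl (k ∙ (Q - A)) (k ∙ (R - A)) := by
  have hli := linearIndependent_sub_of_affineIndependent h
  have : FiniteDimensional k E := Module.finite_of_finrank_eq_succ hE
  constructor
  · rw [disjoint_def]
    intro x hxQ hxR
    obtain ⟨s, rfl⟩ := mem_span_singleton.mp hxQ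
    obtain ⟨t, hts⟩ := mem_span_singleton.mp hxR
    have := (LinearIndependent.pair_iff.mp hli s (-t) (by rw [← hts]; module)).1
    simp [this]
  · rw [codisjoint_iff, ← span_insert, ← Matrix.range_cons_cons_empty _ _ ![]]
    exact hli.span_eq_top_of_card_eq_finrank (by simp [hE])

end LinearAlgebra

section Segment

variable {E : Type*} [AddCommGroup E] [Module ℝ E]

lemma sub_mem_span_singleton_of_mem_segment {P Q A V : E} (hA : A ∈ segment ℝ P Q)
    (hV : V ∈ segment ℝ P Q) : V - A ∈ ℝ ∙ (Q - P) := by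
  rw [segment_eq_image'] at hA hV
  obtain ⟨a, -, rfl⟩ := hA
  obtain ⟨v, -, rfl⟩ := hV
  exact mem_span_singleton.mpr ⟨v - a, by module⟩

lemma span_singleton_sub_eq_of_mem_openSegment {P Q A B X : E} (hA : A ∈ segment ℝ P Q)
    (hX : X ∈ segment ℝ P Q) (hXAB : X ∈ openSegment ℝ A B) (hAB : A ≠ B) :
    ℝ ∙ (Q - P) = ℝ ∙ (B - A) := by
  obtain ⟨k, hk⟩ := mem_span_singleton.mp (sub_mem_span_singleton_of_mem_segment hA hX)
  rw [openSegment_eq_image'] at hXAB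
  obtain ⟨c, ⟨hc, -⟩, rfl⟩ := hXAB
  have hkc : k • (Q - P) = c • (B - A) := by rw [hk]; module
  have hk0 : k ≠ 0 := by
    rintro rfl
    rw [zero_smul, eq_comm, smul_eq_zero, sub_eq_zero] at hkc
    exact hkc.elim hc.ne' hAB.symm
  rw [← span_singleton_smul_eq hk0.isUnit, hkc, span_singleton_smul_eq hc.ne'.isUnit]

end Segment

lemma smul_add_smul_add_smul_mem_interior_convexHull {P Q C : Pt}
    (h : AffineIndependent ℝ ![P, Q, C]) {a b c : ℝ} (ha : 0 < a) (hb : 0 < b) (hc : 0 < c)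
    (habc : a + b + c = 1) : a • P + b • Q + c • C ∈ interior (convexHull ℝ {P, Q, C}) := by
  let β : AffineBasis (Fin 3) ℝ Pt :=
    ⟨![P, Q, C], h, by
      rw [h.affineSpan_eq_top_iff_card_eq_finrank_add_one]
      simp⟩
  have hβ : ⇑β = ![P, Q, C] := rfl
  set w : Fin 3 → ℝ := ![a, b, c]
  have hw : ∑ i, w i = 1 := by simp [w, Fin.sum_univ_three, habc]
  have hcomb : Finset.univ.affineCombination ℝ β w = a • P + b • Q + c • C := by
    rw [Finset.affineCombination_eq_linear_combination _ _ _ hw, hβ, Fin.sum_univ_three]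
    simp [w]
  have hrange : Set.range β = {P, Q, C} := by
    rw [hβ, Matrix.range_cons, Matrix.range_cons_cons_empty, singleton_union]
  rw [← hrange, β.interior_convexHull, ← hcomb]
  intro i
  rw [β.coord_apply_combination_of_mem (Finset.mem_univ i) hw]
  fin_cases i <;> assumption

lemma eventually_add_smul_mem_interior_convexHull {P Q C A w : Pt}
    (h : AffineIndependent ℝ ![P, Q, C]) (hA : A ∈ openSegment ℝ P Q) (hw : w ∈ ℝ ∙ (Q - P)) :
    ∀ᶠ ε in 𝓝[>] (0 : ℝ), A + ε • (C - A + w) ∈ interior (convexHull ℝ {P, Q, C}) := by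
  rw [openSegment_eq_image'] at hA
  obtain ⟨a, ⟨ha₀, ha₁⟩, rfl⟩ := hA
  obtain ⟨k, rfl⟩ := mem_span_singleton.mp hw
  have hP : ∀ᶠ ε in 𝓝[>] (0 : ℝ), 0 < (1 - ε) * (1 - a) - ε * k :=
    ((Continuous.tendsto (by fun_prop) 0).mono_left nhdsWithin_le_nhds).eventually_const_lt
      (by simpa using ha₁)
  have hQ : ∀ᶠ ε in 𝓝[>] (0 : ℝ), 0 < (1 - ε) * a + ε * k :=
    ((Continuous.tendsto (by fun_prop) 0).mono_left nhdsWithin_le_nhds).eventually_const_lt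
      (by simpa using ha₀)
  filter_upwards [hP.and hQ, self_mem_nhdsWithin] with ε ⟨hεP, hεQ⟩ hε
  convert smul_add_smul_add_smul_mem_interior_convexHull h hεP hεQ hε (by ring) using 1
  module

namespace EqTri

variable {T : EqTri} {A P Q R P₁ Q₁ P₂ Q₂ : Pt}

lemma IsEdge.exists_third (h : T.IsEdge P Q) : ∃ C, ({P, Q, C} : Set Pt) = T.vertices := by
  rcases h with ⟨rfl, rfl⟩ | ⟨rfl, rfl⟩ | ⟨rfl, rfl⟩ | ⟨rfl, rfl⟩ | ⟨rfl, rfl⟩ | ⟨rfl, rfl⟩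
  exacts [⟨T.C, rfl⟩, ⟨T.C, by ext; simp [vertices]; tauto⟩,
    ⟨T.A, by ext; simp [vertices]; tauto⟩, ⟨T.A, by ext; simp [vertices]; tauto⟩,
    ⟨T.B, by ext; simp [vertices]; tauto⟩, ⟨T.B, by ext; simp [vertices]; tauto⟩]

lemma affineIndependent_of_vertices_eq {C : Pt} (h : ({P, Q, C} : Set Pt) = T.vertices) :
    AffineIndependent ℝ ![P, Q, C] := by
  rw [affineIndependent_iff_not_collinear_set, h]
  exact affineIndependent_iff_not_collinear_set.mp T.indep

lemma IsEdge.exists_affineIndependent (h : T.IsEdge P Q) :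
    ∃ C, AffineIndependent ℝ ![P, Q, C] ∧ T.set = convexHull ℝ {P, Q, C} := by
  obtain ⟨C, hC⟩ := h.exists_third
  exact ⟨C, affineIndependent_of_vertices_eq hC, by rw [hC]; rfl⟩

lemma IsEdge.ne (h : T.IsEdge P Q) : P ≠ Q := by
  obtain ⟨C, hC, -⟩ := h.exists_affineIndependent
  simpa using hC.injective.ne (show (0 : Fin 3) ≠ 1 by decide)

lemma IsEdge.right_mem_vertices (h : T.IsEdge P Q) : Q ∈ T.vertices := by
  obtain ⟨C, hC⟩ := h.exists_third
  simp [← hC]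

lemma IsEdge.affineIndependent (hQ : T.IsEdge A Q) (hR : T.IsEdge A R) (hQR : Q ≠ R) :
    AffineIndependent ℝ ![A, Q, R] := by
  obtain ⟨C, hC⟩ := hQ.exists_third
  have hR' := hR.right_mem_vertices
  rw [← hC] at hR'
  rcases hR' with rfl | rfl | rfl
  exacts [absurd rfl hR.ne, absurd rfl hQR, affineIndependent_of_vertices_eq hC]

lemma IsEdge.exists_common_vertex (h₁ : T.IsEdge P₁ Q₁) (h₂ : T.IsEdge P₂ Q₂) :
    ∃ V, (V = P₁ ∨ V = Q₁) ∧ (V = P₂ ∨ V = Q₂) := by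
  rcases h₁ with ⟨rfl, rfl⟩ | ⟨rfl, rfl⟩ | ⟨rfl, rfl⟩ | ⟨rfl, rfl⟩ | ⟨rfl, rfl⟩ | ⟨rfl, rfl⟩ <;>
    rcases h₂ with ⟨rfl, rfl⟩ | ⟨rfl, rfl⟩ | ⟨rfl, rfl⟩ | ⟨rfl, rfl⟩ | ⟨rfl, rfl⟩ | ⟨rfl, rfl⟩ <;>
    simp

lemma not_disjoint_span_of_mem_openSegment (h₁ : T.IsEdge P₁ Q₁) (h₂ : T.IsEdge P₂ Q₂)
    (hA₁ : A ∈ openSegment ℝ P₁ Q₁) (hA₂ : A ∈ openSegment ℝ P₂ Q₂) :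
    ¬ Disjoint (ℝ ∙ (Q₁ - P₁)) (ℝ ∙ (Q₂ - P₂)) := by
  obtain ⟨V, hV₁, hV₂⟩ := h₁.exists_common_vertex h₂
  have hmem : ∀ {P Q}, A ∈ openSegment ℝ P Q → (V = P ∨ V = Q) → V - A ∈ ℝ ∙ (Q - P) := by
    rintro P Q hA (rfl | rfl)
    exacts [sub_mem_span_singleton_of_mem_segment (openSegment_subset_segment _ _ _ hA)
      (left_mem_segment _ _ _), sub_mem_span_singleton_of_mem_segment
      (openSegment_subset_segment _ _ _ hA) (right_mem_segment _ _ _)]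
  intro hdisj
  have hVA : V = A := sub_eq_zero.mp (disjoint_def.mp hdisj _ (hmem hA₁ hV₁) (hmem hA₂ hV₂))
  subst hVA
  rcases hV₁ with rfl | rfl
  · exact h₁.ne (left_mem_openSegment_iff.mp hA₁)
  · exact h₁.ne (right_mem_openSegment_iff.mp hA₁)

lemma not_disjoint_interior_of_mem_openSegment {T₁ T₂ : EqTri} (h₁ : T₁.IsEdge P₁ Q₁)
    (h₂ : T₂.IsEdge P₂ Q₂) (hA₁ : A ∈ openSegment ℝ P₁ Q₁) (hA₂ : A ∈ openSegment ℝ P₂ Q₂)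
    (hspan : Codisjoint (ℝ ∙ (Q₁ - P₁)) (ℝ ∙ (Q₂ - P₂))) :
    ¬ Disjoint (interior T₁.set) (interior T₂.set) := by
  obtain ⟨C₁, hC₁, hT₁⟩ := h₁.exists_affineIndependent
  obtain ⟨C₂, hC₂, hT₂⟩ := h₂.exists_affineIndependent
  have hsup : ∀ x, x ∈ ℝ ∙ (Q₁ - P₁) ⊔ ℝ ∙ (Q₂ - P₂) := by simp [hspan.eq_top]
  obtain ⟨u₁, hu₁, v₁, hv₁, huv₁⟩ := mem_sup.mp (hsup (C₁ - A))
  obtain ⟨u₂, hu₂, v₂, hv₂, huv₂⟩ := mem_sup.mp (hsup (C₂ - A))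
  have hz₁ := eventually_add_smul_mem_interior_convexHull hC₁ hA₁ (sub_mem hu₂ hu₁)
  have hz₂ := eventually_add_smul_mem_interior_convexHull hC₂ hA₂ (sub_mem hv₁ hv₂)
  -- both points are `A + ε • (u₂ + v₁)`
  obtain ⟨ε, hε₁, hε₂⟩ := (hz₁.and hz₂).exists
  rw [hT₁, hT₂, not_disjoint_iff]
  refine ⟨_, hε₁, ?_⟩
  convert hε₂ using 3
  rw [← huv₁, ← huv₂]
  abel

end EqTri

/-- In `𝒯`, at most one of the two edges of a triangle meeting at a vertex `A`
continues at `A`. -/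
theorem stmt_6 (𝒯 : Set EqTri) (h : GoodTiling 𝒯) :
    ∀ T ∈ 𝒯, ∀ A Q R : Pt, T.IsEdge A Q → T.IsEdge A R → Q ≠ R →
      ¬ (ContinuesAt 𝒯 T A Q ∧ ContinuesAt 𝒯 T A R) := by
  rintro T - A Q R hQ hR hQR ⟨⟨T₁, hT₁, -, P₁, Q₁, hE₁, hA₁, X₁, hX₁, hX₁A⟩,
    ⟨T₂, hT₂, -, P₂, Q₂, hE₂, hA₂, X₂, hX₂, hX₂A⟩⟩
  have hAQR := hQ.affineIndependent hR hQR
  have hcompl : IsCompl (ℝ ∙ (Q₁ - P₁)) (ℝ ∙ (Q₂ - P₂)) := by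
    rw [span_singleton_sub_eq_of_mem_openSegment (openSegment_subset_segment _ _ _ hA₁) hX₁ hX₁A
        hQ.ne,
      span_singleton_sub_eq_of_mem_openSegment (openSegment_subset_segment _ _ _ hA₂) hX₂ hX₂A
        hR.ne]
    exact isCompl_span_singleton_sub_of_affineIndependent (by simp) hAQR
  by_cases hT : T₁ = T₂
  · subst hT
    exact EqTri.not_disjoint_span_of_mem_openSegment hE₁ hE₂ hA₁ hA₂ hcompl.disjoint
  · exact EqTri.not_disjoint_interior_of_mem_openSegment hE₁ hE₂ hA₁ hA₂ hcompl.codisjoint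
      (h.1.1 T₁ hT₁ T₂ hT₂ hT)
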